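/- arXiv:1107.1814 — 7 statements merged into one kernel-verified Lean document; each statement's English description precedes it below -/
import Mathlib

section
/- For any finite multiset A of nonnegative reals and any integer k ≥ 2, it holds that Ψ_{k-1}(A)^k ≤ Ψ_k(A)^{k-1}. -/
/-- Complete homogeneous sum: sum of all monomials of total degree `k` (with
repetition) in the elements of the list. -/
noncomputable def hcomp : List ℝ → ℕ → ℝ
  | _, 0 => 1
  | [], _ + 1 => 0
  | a :: l, k + 1 => a * hcomp (a :: l) k + hcomp l (k + 1)
  termination_by l k => (l.length, k)

/-- `Ψ_k(A)`: `k!` times the sum of all monomials of total degree `k` in the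
elements of `A`. -/
noncomputable def Psi (k : ℕ) (A : List ℝ) : ℝ := (k.factorial : ℝ) * hcomp A k

/-!
Let `E₁, …, Eₙ` be independent standard exponential random variables and `X = ∑ aᵢ Eᵢ`.
Since `𝔼 Eᵢʲ = j!`, the multinomial expansion of `𝔼 Xᵏ` cancels every multinomial coefficient
against these factorials and leaves `k!` times the complete homogeneous sum of degree `k`,
that is `Ψ_k(A) = 𝔼 Xᵏ`. The inequality is then Lyapunov's inequality
`‖X‖_{k-1} ≤ ‖X‖_k` for a nonnegative random variable.
-/

open MeasureTheory ProbabilityTheory ENNReal Set Finset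

lemma lintegral_prod_add_pow {α β : Type*} [MeasurableSpace α] [MeasurableSpace β]
    {μ : Measure α} {ν : Measure β} [SFinite ν] {f : α → ℝ≥0∞} {g : β → ℝ≥0∞}
    (hf : Measurable f) (hg : Measurable g) (m : ℕ) :
    ∫⁻ z, (f z.1 + g z.2) ^ m ∂μ.prod ν
      = ∑ i ∈ range (m + 1), (∫⁻ x, f x ^ i ∂μ) * (∫⁻ y, g y ^ (m - i) ∂ν) * m.choose i := by
  simp_rw [add_pow]
  rw [lintegral_finsetSum' _ fun i _ => by fun_prop]
  refine sum_congr rfl fun i _ => ?_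
  rw [lintegral_mul_const' _ _ (natCast_ne_top _),
    lintegral_prod_mul (hf.pow_const i).aemeasurable (hg.pow_const _).aemeasurable]

lemma lintegral_pow_pow_succ_le {Ω : Type*} [MeasurableSpace Ω] {μ : Measure Ω}
    [IsProbabilityMeasure μ] {X : Ω → ℝ≥0∞} (hX : AEMeasurable X μ) (n : ℕ) :
    (∫⁻ ω, X ω ^ n ∂μ) ^ (n + 1) ≤ (∫⁻ ω, X ω ^ (n + 1) ∂μ) ^ n := by
  rcases Nat.eq_zero_or_pos n with rfl | hn
  · simp
  have hnorm := eLpNorm'_le_eLpNorm'_of_exponent_le (Nat.cast_pos.mpr hn)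
    (by simp : (n : ℝ) ≤ ((n + 1 : ℕ) : ℝ)) μ hX.aestronglyMeasurable
  simp only [eLpNorm'_eq_lintegral_enorm, enorm_eq_self, ENNReal.rpow_natCast] at hnorm
  have := ENNReal.rpow_le_rpow hnorm (by positivity : (0:ℝ) ≤ n * (n + 1 : ℕ))
  rwa [← ENNReal.rpow_mul, ← ENNReal.rpow_mul, one_div_mul_eq_div, one_div_mul_eq_div,
    mul_div_cancel_left₀ _ (by positivity), mul_div_cancel_right₀ _ (by positivity),
    ENNReal.rpow_natCast, ENNReal.rpow_natCast] at this

lemma lintegral_ofReal_pow_expMeasure_one (m : ℕ) :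
    ∫⁻ s, ENNReal.ofReal s ^ m ∂expMeasure 1 = m.factorial := by
  have hpdf : (fun s => exponentialPDF 1 s * ENNReal.ofReal s ^ m)
      = (Set.Ici 0).indicator (fun s => ENNReal.ofReal (Real.exp (-s) * s ^ m)) := by
    ext s
    rcases lt_or_ge s 0 with hs | hs
    · simp [exponentialPDF_of_neg hs, hs]
    · simp [exponentialPDF_of_nonneg hs, hs, ENNReal.ofReal_mul (Real.exp_nonneg _),
        ENNReal.ofReal_pow hs]
  have hint : IntegrableOn (fun s : ℝ => Real.exp (-s) * s ^ m) (Ioi 0) :=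
    (Real.GammaIntegral_convergent (s := m + 1) (by positivity)).congr_fun
      (fun s _ => by simp [Real.rpow_natCast]) measurableSet_Ioi
  have hmeas : Measurable (exponentialPDF 1) := (measurable_gammaPDFReal 1 1).ennreal_ofReal
  change ∫⁻ s, ENNReal.ofReal s ^ m ∂volume.withDensity (exponentialPDF 1) = _
  rw [lintegral_withDensity_eq_lintegral_mul _ hmeas (by fun_prop), Pi.mul_def, hpdf,
    lintegral_indicator measurableSet_Ici, ← setLIntegral_congr Ioi_ae_eq_Ici,
    ← ofReal_integral_eq_lintegral_ofReal hint
      (ae_restrict_of_forall_mem measurableSet_Ioi fun s (hs : 0 < s) => by positivity),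
    ← ENNReal.ofReal_natCast, ← Real.Gamma_nat_eq_factorial, Real.Gamma_eq_integral (by positivity)]
  exact congrArg ENNReal.ofReal (setIntegral_congr_fun measurableSet_Ioi fun s _ => by
    simp [Real.rpow_natCast])

lemma hcomp_cons_eq_sum (a : ℝ) (l : List ℝ) (m : ℕ) :
    hcomp (a :: l) m = ∑ i ∈ range (m + 1), a ^ i * hcomp l (m - i) := by
  induction m with
  | zero => simp [hcomp]
  | succ m ih =>
    rw [hcomp, ih, sum_range_succ' _ (m + 1), mul_sum]
    simp only [Nat.succ_sub_succ, pow_zero, one_mul, Nat.sub_zero, pow_succ']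
    simp only [mul_assoc]

lemma hcomp_nonneg {l : List ℝ} (hl : ∀ a ∈ l, 0 ≤ a) (m : ℕ) : 0 ≤ hcomp l m := by
  induction l generalizing m with
  | nil => cases m <;> simp [hcomp]
  | cons a l ih =>
    rw [hcomp_cons_eq_sum]
    have ha : 0 ≤ a := hl a List.mem_cons_self
    exact sum_nonneg fun i _ =>
      mul_nonneg (pow_nonneg ha i) (ih (fun b hb => hl b (List.mem_cons_of_mem a hb)) _)

lemma Psi_nonneg {l : List ℝ} (hl : ∀ a ∈ l, 0 ≤ a) (m : ℕ) : 0 ≤ Psi m l :=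
  mul_nonneg (Nat.cast_nonneg _) (hcomp_nonneg hl m)

lemma Psi_cons (a : ℝ) (l : List ℝ) (m : ℕ) :
    Psi m (a :: l) = ∑ i ∈ range (m + 1), a ^ i * i.factorial * Psi (m - i) l * m.choose i := by
  rw [Psi, hcomp_cons_eq_sum, mul_sum]
  refine sum_congr rfl fun i hi => ?_
  have hfac : (m.factorial : ℝ) = m.choose i * i.factorial * (m - i).factorial := by
    exact_mod_cast (Nat.choose_mul_factorial_mul_factorial (mem_range_succ_iff.mp hi)).symm
  rw [Psi, hfac]
  ring

lemma ofReal_Psi_cons {a : ℝ} {l : List ℝ} (ha : 0 ≤ a) (hl : ∀ b ∈ l, 0 ≤ b) (m : ℕ) :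
    ENNReal.ofReal (Psi m (a :: l)) = ∑ i ∈ range (m + 1),
      ENNReal.ofReal a ^ i * i.factorial * ENNReal.ofReal (Psi (m - i) l) * m.choose i := by
  have hPsi (i : ℕ) := Psi_nonneg hl (m - i)
  rw [Psi_cons, ENNReal.ofReal_sum_of_nonneg fun i _ => by have := hPsi i; positivity]
  refine sum_congr rfl fun i _ => ?_
  have := hPsi i
  rw [ENNReal.ofReal_mul (by positivity), ENNReal.ofReal_mul (by positivity),
    ENNReal.ofReal_mul (by positivity), ENNReal.ofReal_pow ha, ofReal_natCast, ofReal_natCast]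

theorem exists_lintegral_pow_eq_ofReal_Psi (A : List ℝ) (hA : ∀ a ∈ A, 0 ≤ a) :
    ∃ (Ω : Type) (_ : MeasurableSpace Ω) (μ : Measure Ω) (_ : IsProbabilityMeasure μ)
      (X : Ω → ℝ≥0∞), Measurable X ∧ ∀ m, ∫⁻ ω, X ω ^ m ∂μ = ENNReal.ofReal (Psi m A) := by
  induction A with
  | nil =>
    refine ⟨Unit, inferInstance, Measure.dirac (), inferInstance, 0, measurable_const,
      fun m => ?_⟩
    cases m <;> simp [Psi, hcomp]
  | cons a l ih =>
    have ha : 0 ≤ a := hA a List.mem_cons_self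
    have hl : ∀ b ∈ l, 0 ≤ b := fun b hb => hA b (List.mem_cons_of_mem a hb)
    obtain ⟨Ω, _, μ, _, X, hX, hmom⟩ := ih hl
    have : IsProbabilityMeasure (expMeasure 1) := isProbabilityMeasure_expMeasure one_pos
    refine ⟨ℝ × Ω, inferInstance, (expMeasure 1).prod μ, inferInstance,
      fun z => ENNReal.ofReal a * ENNReal.ofReal z.1 + X z.2, by fun_prop, fun m => ?_⟩
    beta_reduce
    rw [lintegral_prod_add_pow (f := fun s => ENNReal.ofReal a * ENNReal.ofReal s) (by fun_prop) hX,
      ofReal_Psi_cons ha hl]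
    refine sum_congr rfl fun i _ => ?_
    simp_rw [mul_pow]
    rw [lintegral_const_mul _ (by fun_prop), lintegral_ofReal_pow_expMeasure_one, hmom]

theorem stmt_4_general (k : ℕ) (A : List ℝ) (hA : ∀ a ∈ A, 0 ≤ a) :
    Psi (k - 1) A ^ k ≤ Psi k A ^ (k - 1) := by
  obtain _ | n := k
  · simp
  obtain ⟨Ω, _, μ, _, X, hX, hmom⟩ := exists_lintegral_pow_eq_ofReal_Psi A hA
  have hLyapunov := lintegral_pow_pow_succ_le (μ := μ) hX.aemeasurable n
  rw [hmom, hmom, ← ofReal_pow (Psi_nonneg hA n), ← ofReal_pow (Psi_nonneg hA (n + 1)),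
    ofReal_le_ofReal_iff (pow_nonneg (Psi_nonneg hA _) _)] at hLyapunov
  simpa using hLyapunov

theorem stmt_4 (k : ℕ) (hk : 2 ≤ k) (A : List ℝ) (hA : ∀ a ∈ A, 0 ≤ a) :
    Psi (k - 1) A ^ k ≤ Psi k A ^ (k - 1) :=
  stmt_4_general k A hA
end

section
/- For any finite multiset A of nonnegative reals, any nonnegative real b, and any integer k ≥ 1, Ψ_k(A ∪ {b}) - Ψ_k(A) = k · b · Ψ_{k-1}(A ∪ {b}). -/
theorem stmt_6 (k : ℕ) (hk : 1 ≤ k) (A : List ℝ) (hA : ∀ a ∈ A, 0 ≤ a)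
    (b : ℝ) (hb : 0 ≤ b) :
    Psi k (b :: A) - Psi k A = (k : ℝ) * b * Psi (k - 1) (b :: A) := by
  cases k with
  | zero => omega
  | succ n =>
    simp only [Psi, Nat.succ_sub_one, hcomp]
    push_cast [Nat.factorial_succ]
    ring
end

section
/- For any finite multiset A of nonnegative reals with sum L(A) and any integer k ≥ 1, Ψ_k(A) ≤ k · L(A) · Ψ_{k-1}(A). -/
lemma hcomp_nonneg_s7 : ∀ (A : List ℝ) (k : ℕ), (∀ a ∈ A, 0 ≤ a) → 0 ≤ hcomp A k
  | _, 0, _ => by simp [hcomp]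
  | [], _ + 1, _ => by simp [hcomp]
  | a :: l, k + 1, h => by
    have ha : 0 ≤ a := h a (by simp)
    have hl : ∀ b ∈ l, 0 ≤ b := fun b hb => h b (by simp [hb])
    have h1 := hcomp_nonneg_s7 (a :: l) k h
    have h2 := hcomp_nonneg_s7 l (k + 1) hl
    rw [hcomp]
    positivity
  termination_by A k => (A.length, k)

lemma hcomp_le_cons (a : ℝ) (l : List ℝ) (k : ℕ) (ha : 0 ≤ a)
    (hl : ∀ b ∈ l, 0 ≤ b) : hcomp l k ≤ hcomp (a :: l) k := by
  cases k with
  | zero => simp [hcomp]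
  | succ k =>
    rw [hcomp]
    have h1 := hcomp_nonneg_s7 (a :: l) k (by
      intro b hb
      rcases List.mem_cons.mp hb with h | h
      · exact h ▸ ha
      · exact hl b h)
    nlinarith

lemma hcomp_succ_le : ∀ (A : List ℝ) (k : ℕ), (∀ a ∈ A, 0 ≤ a) →
    hcomp A (k + 1) ≤ A.sum * hcomp A k
  | [], k, _ => by simp [hcomp]
  | a :: l, k, h => by
    have ha : 0 ≤ a := h a (by simp)
    have hl : ∀ b ∈ l, 0 ≤ b := fun b hb => h b (by simp [hb])
    have IH := hcomp_succ_le l k hl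
    have hmono := hcomp_le_cons a l k ha hl
    have hlk := hcomp_nonneg_s7 l k hl
    have hsum : 0 ≤ l.sum := List.sum_nonneg hl
    rw [hcomp, List.sum_cons]
    nlinarith

theorem stmt_7 (k : ℕ) (hk : 1 ≤ k) (A : List ℝ) (hA : ∀ a ∈ A, 0 ≤ a) :
    Psi k A ≤ (k : ℝ) * A.sum * Psi (k - 1) A := by
  obtain ⟨m, rfl⟩ : ∃ m, k = m + 1 := ⟨k - 1, (Nat.succ_pred_eq_of_pos hk).symm⟩
  simp only [Psi, Nat.add_sub_cancel, Nat.factorial_succ]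
  have h := hcomp_succ_le A m hA
  have hfac : (0:ℝ) ≤ (m.factorial : ℝ) := by positivity
  push_cast
  nlinarith [mul_le_mul_of_nonneg_left h (by positivity : (0:ℝ) ≤ ((m:ℝ)+1) * m.factorial)]
end

section
/- In the game induced by the coordination mechanism ACOORD, the function that maps an assignment to the vector of job completion times sorted by increasing job ID decreases lexicographically whenever a job unilaterally deviates to strictly decrease its completion time; hence the game is a potential game and possesses a pure Nash equilibrium. -/
/-- The minimum load of job `i` over all machines. -/
noncomputable def wmin {n m : ℕ} (w : Fin n → Fin m → ℝ) (i : Fin n) : ℝ :=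
  sInf (Set.range (w i))

/-- The inefficiency of job `i` on machine `j`. -/
noncomputable def rho {n m : ℕ} (w : Fin n → Fin m → ℝ) (i : Fin n) (j : Fin m) : ℝ :=
  w i j / wmin w i

/-- The load of machine `j` under assignment `N`. -/
noncomputable def load {n m : ℕ} (w : Fin n → Fin m → ℝ) (N : Fin n → Fin m) (j : Fin m) : ℝ :=
  ∑ i ∈ Finset.univ.filter (fun i => N i = j), w i j

/-- The load on machine `j` of jobs with ID at most `i` under assignment `N`. -/
noncomputable def loadPre {n m : ℕ} (w : Fin n → Fin m → ℝ) (N : Fin n → Fin m)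
    (i : Fin n) (j : Fin m) : ℝ :=
  ∑ i' ∈ Finset.univ.filter (fun i' => N i' = j ∧ i' ≤ i), w i' j

/-- The completion time of job `i` under assignment `N` with the ACOORD mechanism. -/
noncomputable def Acost {n m : ℕ} (p : ℕ) (w : Fin n → Fin m → ℝ)
    (N : Fin n → Fin m) (i : Fin n) : ℝ :=
  rho w i (N i) ^ ((1 : ℝ) / p) * loadPre w N i (N i)

/-- `N` is a pure Nash equilibrium of the game induced by ACOORD. -/
def isNashA {n m : ℕ} (p : ℕ) (w : Fin n → Fin m → ℝ) (N : Fin n → Fin m) : Prop :=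
  ∀ (i : Fin n) (j : Fin m), Acost p w N i ≤ Acost p w (Function.update N i j) i

theorem stmt_10 (n m : ℕ) (p : ℕ) (hp : 1 ≤ p) (hm : 0 < m)
    (w : Fin n → Fin m → ℝ) (hw : ∀ i j, 0 < w i j) :
    (∀ (N : Fin n → Fin m) (i : Fin n) (j : Fin m),
        Acost p w (Function.update N i j) i < Acost p w N i →
          Pi.Lex (· < ·) (· < ·) (fun k => Acost p w (Function.update N i j) k)
            (fun k => Acost p w N k)) ∧
      ∃ N : Fin n → Fin m, isNashA p w N := by
  have key : ∀ (N : Fin n → Fin m) (i : Fin n) (j : Fin m),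
      Acost p w (Function.update N i j) i < Acost p w N i →
        Pi.Lex (· < ·) (· < ·) (fun k => Acost p w (Function.update N i j) k)
          (fun k => Acost p w N k) := by
    intro N i j h
    refine ⟨i, ?_, h⟩
    intro k hk
    have hki : k ≠ i := ne_of_lt hk
    have h1 : Function.update N i j k = N k := Function.update_of_ne hki j N
    simp only [Acost, h1, loadPre]
    congr 1
    refine Finset.sum_congr (Finset.filter_congr ?_) (fun _ _ => rfl)
    intro x _
    have hx : x ≤ k → x ≠ i := fun hle => (lt_of_le_of_lt hle hk).ne
    constructor
    · rintro ⟨hx1, hx2⟩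
      exact ⟨by rwa [Function.update_of_ne (hx hx2)] at hx1, hx2⟩
    · rintro ⟨hx1, hx2⟩
      exact ⟨by rw [Function.update_of_ne (hx hx2)]; exact hx1, hx2⟩
  refine ⟨key, ?_⟩
  set R : (Fin n → Fin m) → (Fin n → Fin m) → Prop :=
    fun N' N => Pi.Lex (· < ·) (· < ·) (fun k => Acost p w N' k) (fun k => Acost p w N k)
    with hR
  haveI : IsTrans (Fin n → Fin m) R :=
    ⟨fun a b c h1 h2 => @trans_of (Lex (Fin n → ℝ)) (· < ·)
      (toLex fun k => Acost p w a k) (toLex fun k => Acost p w b k)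
      (toLex fun k => Acost p w c k) _ h1 h2⟩
  haveI : IsIrrefl (Fin n → Fin m) R :=
    ⟨fun a h => irrefl_of (α := Lex (Fin n → ℝ)) (· < ·)
      (toLex fun k => Acost p w a k) h⟩
  obtain ⟨N, -, hN⟩ := (Finite.wellFounded_of_trans_of_irrefl R).has_min Set.univ
    ⟨fun _ => ⟨0, hm⟩, Set.mem_univ _⟩
  refine ⟨N, fun i j => ?_⟩
  by_contra hlt
  push_neg at hlt
  exact hN (Function.update N i j) (Set.mem_univ _) (key N i j hlt)
end

section
/- Let N be a pure Nash equilibrium of the game induced by ACOORD with parameter p ≥ 1 and let O be any assignment. Then the maximum completion time of any job in N is at most (∑_j L(N_j)^{p+1})^{1/(p+1)} + max_j L(O_j). -/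
theorem stmt_11 (n m : ℕ) (p : ℕ) (hp : 1 ≤ p) (hm : 0 < m)
    (w : Fin n → Fin m → ℝ) (hw : ∀ i j, 0 < w i j)
    (N O : Fin n → Fin m) (hN : isNashA p w N) :
    ∀ i : Fin n, Acost p w N i ≤
      (∑ j, load w N j ^ (p + 1)) ^ ((1 : ℝ) / (p + 1)) +
        Finset.univ.sup' ⟨⟨0, hm⟩, Finset.mem_univ _⟩ (load w O) := by
  intro i
  haveI : Nonempty (Fin m) := ⟨⟨0, hm⟩⟩
  obtain ⟨j₀, -, hj₀⟩ := Finset.exists_min_image (Finset.univ : Finset (Fin m)) (w i)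
    ⟨⟨0, hm⟩, Finset.mem_univ _⟩
  have hwmin : wmin w i = w i j₀ := by
    apply le_antisymm
    · exact csInf_le (Set.finite_range _).bddBelow ⟨j₀, rfl⟩
    · exact le_csInf (Set.range_nonempty _)
        (by rintro x ⟨j, rfl⟩; exact hj₀ j (Finset.mem_univ j))
  have hrho : rho w i j₀ = 1 := by
    rw [rho, hwmin, div_self (hw i j₀).ne']
  have hL0 : ∀ (M : Fin n → Fin m) j, 0 ≤ load w M j := fun M j =>
    Finset.sum_nonneg fun i' _ => (hw i' j).le
  -- Nash step
  have key : Acost p w (Function.update N i j₀) i = loadPre w (Function.update N i j₀) i j₀ := by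
    rw [Acost, Function.update_self, hrho, Real.one_rpow, one_mul]
  have h1 : Acost p w N i ≤ loadPre w (Function.update N i j₀) i j₀ := (hN i j₀).trans_eq key
  -- loadPre bound
  have h2 : loadPre w (Function.update N i j₀) i j₀ ≤ load w N j₀ + w i j₀ := by
    rw [loadPre]
    have hiS : i ∈ Finset.univ.filter
        (fun i' => Function.update N i j₀ i' = j₀ ∧ i' ≤ i) := by
      simp [Function.update_self]
    rw [← Finset.add_sum_erase _ _ hiS, add_comm]
    gcongr
    apply Finset.sum_le_sum_of_subset_of_nonneg
    · intro x hx
      simp only [Finset.mem_erase, Finset.mem_filter, Finset.mem_univ, true_and] at hx ⊢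
      rw [Function.update_of_ne hx.1] at hx
      exact hx.2.1
    · intro x _ _
      exact (hw x j₀).le
  -- load bound
  have h3 : load w N j₀ ≤ (∑ j, load w N j ^ (p + 1)) ^ ((1 : ℝ) / (p + 1)) := by
    have hpow : load w N j₀ ^ (p + 1) ≤ ∑ j, load w N j ^ (p + 1) :=
      Finset.single_le_sum (fun j _ => pow_nonneg (hL0 N j) _) (Finset.mem_univ j₀)
    have hne : ((p : ℝ) + 1) ≠ 0 := by positivity
    calc load w N j₀
        = (load w N j₀ ^ (p + 1)) ^ ((1 : ℝ) / (p + 1)) := by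
          rw [← Real.rpow_natCast (load w N j₀) (p + 1), ← Real.rpow_mul (hL0 N j₀)]
          push_cast
          rw [mul_one_div, div_self hne, Real.rpow_one]
      _ ≤ (∑ j, load w N j ^ (p + 1)) ^ ((1 : ℝ) / (p + 1)) := by
          apply Real.rpow_le_rpow (pow_nonneg (hL0 N j₀) _) hpow
          positivity
  -- w i j₀ bound
  have h4 : w i j₀ ≤ Finset.univ.sup' ⟨⟨0, hm⟩, Finset.mem_univ _⟩ (load w O) := by
    have ha : w i j₀ ≤ w i (O i) := hj₀ (O i) (Finset.mem_univ _)
    have hb : w i (O i) ≤ load w O (O i) := by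
      apply Finset.single_le_sum (f := fun i' => w i' (O i))
        (fun x _ => (hw x (O i)).le)
      simp
    exact ha.trans (hb.trans (Finset.le_sup' _ (Finset.mem_univ (O i))))
  calc Acost p w N i ≤ load w N j₀ + w i j₀ := h1.trans h2
    _ ≤ _ := add_le_add h3 h4
end

section
/- Let N be a pure Nash equilibrium of the game induced by ACOORD with parameter p ≥ 1 and O any assignment. Then (∑_j L(N_j)^{p+1})^{1/(p+1)} ≤ e(p+1)·m^{1/(p+1)}·max_j L(O_j). -/
open Finset

section Inequalities

variable {ι : Type*}

lemma pow_succ_sub_pow_succ_le {a b : ℝ} (p : ℕ) (hb : 0 ≤ b) (hba : b ≤ a) :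
    a ^ (p + 1) - b ^ (p + 1) ≤ (p + 1) * (a - b) * a ^ p := by
  have h := abs_pow_sub_pow_le a b (p + 1)
  rw [abs_of_nonneg (sub_nonneg.2 hba), abs_of_nonneg hb, abs_of_nonneg (hb.trans hba),
    max_eq_left hba, Nat.add_sub_cancel, Nat.cast_succ] at h
  linarith [le_abs_self (a ^ (p + 1) - b ^ (p + 1))]

lemma sum_pow_succ_le_sum_mul_prefix_pow [LinearOrder ι] (p : ℕ) {f : ι → ℝ}
    (hf : ∀ i, 0 ≤ f i) (s : Finset ι) :
    (∑ i ∈ s, f i) ^ (p + 1) ≤ (p + 1) * ∑ i ∈ s, f i * (∑ k ∈ s with k ≤ i, f k) ^ p := by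
  induction s using Finset.induction_on_max with
  | empty => simp
  | insert a s ha ih =>
    have ha' : a ∉ s := fun h => lt_irrefl a (ha a h)
    have hprefix : ∀ i ∈ s, {k ∈ insert a s | k ≤ i} = {k ∈ s | k ≤ i} := fun i hi => by
      rw [filter_insert, if_neg (ha i hi).not_ge]
    have htop : {k ∈ insert a s | k ≤ a} = insert a s :=
      filter_true_of_mem fun k hk => (mem_insert.1 hk).elim le_of_eq fun hk => (ha k hk).le
    have hstep := pow_succ_sub_pow_succ_le p (sum_nonneg fun i _ => hf i)
      (le_add_of_nonneg_left (hf a) : ∑ i ∈ s, f i ≤ f a + ∑ i ∈ s, f i)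
    rw [add_sub_cancel_right] at hstep
    have hrest : ∑ i ∈ s, f i * (∑ k ∈ insert a s with k ≤ i, f k) ^ p
        = ∑ i ∈ s, f i * (∑ k ∈ s with k ≤ i, f k) ^ p :=
      sum_congr rfl fun i hi => by rw [hprefix i hi]
    rw [sum_insert ha', sum_insert ha', htop, sum_insert ha', hrest]
    linarith

lemma le_exp_one_mul_of_pow_succ_le (p : ℕ) {A B : ℝ} (hB : 0 ≤ B)
    (h : A ^ (p + 1) ≤ (p + 1) * B * (A + B) ^ p) : A ≤ Real.exp 1 * (p + 1) * B := by
  by_contra! hlt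
  have he : 1 ≤ Real.exp 1 := Real.one_le_exp zero_le_one
  have hA : 0 < A := lt_of_le_of_lt (by positivity) hlt
  have hBA : (p + 1) * B ≤ A := by nlinarith
  -- `A + B ≤ A (1 + 1/(p+1))`, and `(1 + 1/(p+1))^p ≤ (1 + 1/(p+1))^(p+1) ≤ e`.
  have hsum : (A + B) ^ p ≤ A ^ p * Real.exp 1 := by
    have hp : (0 : ℝ) < p + 1 := by positivity
    have hbase : A + B ≤ A * (1 + ((p + 1 : ℕ) : ℝ)⁻¹) := by
      have : B ≤ A / (p + 1) := by rw [le_div_iff₀ hp]; linarith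
      rw [Nat.cast_succ, mul_add, mul_one, ← div_eq_mul_inv]
      linarith
    calc (A + B) ^ p ≤ (A * (1 + ((p + 1 : ℕ) : ℝ)⁻¹)) ^ p := by gcongr
      _ ≤ A ^ p * (1 + ((p + 1 : ℕ) : ℝ)⁻¹) ^ (p + 1) := by
        rw [mul_pow]
        gcongr
        · exact le_add_of_nonneg_right (by positivity)
        · exact p.le_succ
      _ ≤ A ^ p * Real.exp 1 := by gcongr; exact Real.one_add_inv_pow_le_exp
  have : A ^ (p + 1) < A ^ (p + 1) :=
    calc A ^ (p + 1) ≤ (p + 1) * B * (A ^ p * Real.exp 1) := h.trans (by gcongr)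
      _ = A ^ p * (Real.exp 1 * (p + 1) * B) := by ring
      _ < A ^ p * A := by gcongr
      _ = A ^ (p + 1) := (pow_succ A p).symm
  exact lt_irrefl _ this

variable [Fintype ι]

noncomputable def lpNormSucc (p : ℕ) (f : ι → ℝ) : ℝ :=
  (∑ i, f i ^ (p + 1)) ^ ((1 : ℝ) / (p + 1))

variable {p : ℕ} {f g : ι → ℝ}

lemma rpow_natCast_succ (x : ℝ) (p : ℕ) : x ^ ((p : ℝ) + 1) = x ^ (p + 1) := by
  rw [← Nat.cast_succ, Real.rpow_natCast]

lemma lpNormSucc_nonneg (hf : ∀ i, 0 ≤ f i) : 0 ≤ lpNormSucc p f :=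
  Real.rpow_nonneg (sum_nonneg fun i _ => pow_nonneg (hf i) _) _

lemma lpNormSucc_pow (hf : ∀ i, 0 ≤ f i) : lpNormSucc p f ^ (p + 1) = ∑ i, f i ^ (p + 1) := by
  rw [lpNormSucc, one_div, ← Nat.cast_succ,
    Real.rpow_inv_natCast_pow (sum_nonneg fun i _ => pow_nonneg (hf i) _) p.succ_ne_zero]

lemma lpNormSucc_add_le (hf : ∀ i, 0 ≤ f i) (hg : ∀ i, 0 ≤ g i) :
    lpNormSucc p (f + g) ≤ lpNormSucc p f + lpNormSucc p g := by
  have h := Real.Lp_add_le_of_nonneg univ (p := (p : ℝ) + 1)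
    (by linarith [p.cast_nonneg (α := ℝ)]) (fun i _ => hf i) (fun i _ => hg i)
  simpa only [lpNormSucc, Pi.add_apply, rpow_natCast_succ] using h

lemma lpNormSucc_mono (hf : ∀ i, 0 ≤ f i) (hfg : ∀ i, f i ≤ g i) :
    lpNormSucc p f ≤ lpNormSucc p g :=
  Real.rpow_le_rpow (sum_nonneg fun i _ => pow_nonneg (hf i) _)
    (sum_le_sum fun i _ => pow_le_pow_left₀ (hf i) (hfg i) _) (by positivity)

lemma lpNormSucc_le_card_rpow_mul {M : ℝ} (hf : ∀ i, 0 ≤ f i) (hfM : ∀ i, f i ≤ M) (hM : 0 ≤ M) :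
    lpNormSucc p f ≤ (Fintype.card ι : ℝ) ^ ((1 : ℝ) / (p + 1)) * M := by
  calc lpNormSucc p f ≤ lpNormSucc p (fun _ => M) := lpNormSucc_mono hf hfM
    _ = _ := by
      rw [lpNormSucc, sum_const, card_univ, nsmul_eq_mul, Real.mul_rpow (by positivity)
        (by positivity), one_div, ← Nat.cast_succ, Real.pow_rpow_inv_natCast hM p.succ_ne_zero]

/-- Hölder's inequality with the conjugate exponents `p + 1` and `(p + 1) / p`. -/
lemma sum_mul_pow_le_lpNormSucc_mul_pow (hp : 1 ≤ p) (hf : ∀ i, 0 ≤ f i) (hg : ∀ i, 0 ≤ g i) :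
    ∑ i, f i * g i ^ p ≤ lpNormSucc p f * lpNormSucc p g ^ p := by
  have hp0 : (0 : ℝ) < p := by exact_mod_cast hp
  have hconj : ((p : ℝ) + 1).HolderConjugate (((p : ℝ) + 1) / p) :=
    Real.holderConjugate_iff.2 ⟨by linarith, by field_simp; ring⟩
  have h := Real.inner_le_Lp_mul_Lq_of_nonneg univ hconj (fun i _ => hf i)
    (fun i _ => pow_nonneg (hg i) p)
  have hpow : ∀ i, (g i ^ p) ^ (((p : ℝ) + 1) / p) = g i ^ (p + 1) := fun i => by
    rw [← Real.rpow_natCast, ← Real.rpow_mul (hg i), mul_div_cancel₀ _ hp0.ne', rpow_natCast_succ]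
  have hnorm : (∑ i, g i ^ (p + 1)) ^ (1 / (((p : ℝ) + 1) / p)) = lpNormSucc p g ^ p := by
    rw [lpNormSucc, ← Real.rpow_natCast, ← Real.rpow_mul
      (sum_nonneg fun i _ => pow_nonneg (hg i) _), one_div_div, one_div_mul_eq_div]
  simpa only [lpNormSucc, rpow_natCast_succ, hpow, hnorm] using h

end Inequalities

section Game

variable {n m : ℕ} {w : Fin n → Fin m → ℝ} {p : ℕ}

lemma wmin_pos (hw : ∀ i j, 0 < w i j) (i : Fin n) (j : Fin m) : 0 < wmin w i := by
  obtain ⟨k, hk⟩ := (Set.range_nonempty_iff_nonempty.2 ⟨j⟩).csInf_mem (Set.finite_range (w i))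
  rw [wmin, ← hk]
  exact hw i k

lemma wmin_rpow_mul_Acost (hw : ∀ i j, 0 < w i j) (N : Fin n → Fin m) (i : Fin n) :
    wmin w i ^ ((1 : ℝ) / p) * Acost p w N i =
      w i (N i) ^ ((1 : ℝ) / p) * loadPre w N i (N i) := by
  have hmin := wmin_pos hw i (N i)
  rw [Acost, rho, Real.div_rpow (hw i (N i)).le hmin.le, ← mul_assoc,
    mul_div_cancel₀ _ (Real.rpow_pos_of_pos hmin _).ne']

lemma loadPre_update_self_le (hw : ∀ i j, 0 ≤ w i j) (N : Fin n → Fin m) (i : Fin n)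
    (j : Fin m) : loadPre w (Function.update N i j) i j ≤ load w N j + w i j := by
  have hi : i ∈ univ.filter fun k => Function.update N i j k = j ∧ k ≤ i := by simp
  rw [loadPre, ← sum_erase_add _ _ hi]
  refine add_le_add_left (sum_le_sum_of_subset_of_nonneg (fun k hk => ?_) fun k _ _ => hw k j) _
  obtain ⟨hki, hk⟩ := mem_erase.1 hk
  simp only [mem_filter, mem_univ, true_and, Function.update_of_ne hki] at hk ⊢
  exact hk.1

/-- Multiplying the equilibrium condition by `wmin w i ^ (1 / p)` turns `rho ^ (1 / p)` into
`w ^ (1 / p)`, and the `p`-th power then removes the root. -/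
lemma isNashA.mul_loadPre_pow_le (hp : p ≠ 0) (hw : ∀ i j, 0 < w i j) {N : Fin n → Fin m}
    (hN : isNashA p w N) (i : Fin n) (j : Fin m) :
    w i (N i) * loadPre w N i (N i) ^ p ≤ w i j * (load w N j + w i j) ^ p := by
  have hroot : w i (N i) ^ ((1 : ℝ) / p) * loadPre w N i (N i) ≤
      w i j ^ ((1 : ℝ) / p) * (load w N j + w i j) :=
    calc w i (N i) ^ ((1 : ℝ) / p) * loadPre w N i (N i)
        = wmin w i ^ ((1 : ℝ) / p) * Acost p w N i := (wmin_rpow_mul_Acost hw N i).symm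
      _ ≤ wmin w i ^ ((1 : ℝ) / p) * Acost p w (Function.update N i j) i :=
        mul_le_mul_of_nonneg_left (hN i j) (Real.rpow_nonneg (wmin_pos hw i j).le _)
      _ = w i j ^ ((1 : ℝ) / p) * loadPre w (Function.update N i j) i j := by
        rw [wmin_rpow_mul_Acost hw, Function.update_self]
      _ ≤ w i j ^ ((1 : ℝ) / p) * (load w N j + w i j) :=
        mul_le_mul_of_nonneg_left (loadPre_update_self_le (fun i j => (hw i j).le) N i j)
          (Real.rpow_nonneg (hw i j).le _)
  have hpow := pow_le_pow_left₀ (mul_nonneg (Real.rpow_nonneg (hw i (N i)).le _)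
    (sum_nonneg fun k _ => (hw k _).le)) hroot p
  rwa [mul_pow, mul_pow, one_div, Real.rpow_inv_natCast_pow (hw i (N i)).le hp,
    Real.rpow_inv_natCast_pow (hw i j).le hp] at hpow

variable (w)

lemma load_nonneg (hw : ∀ i j, 0 ≤ w i j) (N : Fin n → Fin m) (j : Fin m) : 0 ≤ load w N j :=
  sum_nonneg fun i _ => hw i j

lemma le_load_self (hw : ∀ i j, 0 ≤ w i j) (N : Fin n → Fin m) (i : Fin n) :
    w i (N i) ≤ load w N (N i) :=
  single_le_sum (f := fun k => w k (N i)) (fun k _ => hw k _) (by simp)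

lemma sum_load_mul (N : Fin n → Fin m) (g : Fin m → ℝ) :
    ∑ j, load w N j * g j = ∑ i, w i (N i) * g (N i) := by
  simp only [load, sum_mul]
  rw [← sum_fiberwise univ N]
  exact sum_congr rfl fun j _ => sum_congr rfl fun i hi => by rw [(mem_filter.1 hi).2]

lemma load_pow_succ_le (hw : ∀ i j, 0 ≤ w i j) (N : Fin n → Fin m) (j : Fin m) :
    load w N j ^ (p + 1) ≤ (p + 1) * ∑ i with N i = j, w i (N i) * loadPre w N i (N i) ^ p := by
  have h := sum_pow_succ_le_sum_mul_prefix_pow p (hw · j) {i | N i = j}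
  simp only [filter_filter] at h
  refine h.trans_eq (congrArg _ (sum_congr rfl fun i hi => ?_))
  obtain rfl := (mem_filter.1 hi).2
  rfl

lemma sum_load_pow_succ_le (hw : ∀ i j, 0 ≤ w i j) (N : Fin n → Fin m) :
    ∑ j, load w N j ^ (p + 1) ≤ (p + 1) * ∑ i, w i (N i) * loadPre w N i (N i) ^ p := by
  rw [← sum_fiberwise univ N, mul_sum]
  exact sum_le_sum fun j _ => load_pow_succ_le w hw N j

variable {w}

lemma isNashA.sum_load_pow_succ_le_lpNormSucc (hp : 1 ≤ p) (hw : ∀ i j, 0 < w i j)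
    {N : Fin n → Fin m} (hN : isNashA p w N) (O : Fin n → Fin m) :
    ∑ j, load w N j ^ (p + 1) ≤ (p + 1) * lpNormSucc p (load w O) *
      (lpNormSucc p (load w N) + lpNormSucc p (load w O)) ^ p := by
  have hw' : ∀ i j, 0 ≤ w i j := fun i j => (hw i j).le
  have hLN := load_nonneg w hw' N
  have hLO := load_nonneg w hw' O
  calc ∑ j, load w N j ^ (p + 1)
      ≤ (p + 1) * ∑ i, w i (N i) * loadPre w N i (N i) ^ p := sum_load_pow_succ_le w hw' N
    _ ≤ (p + 1) * ∑ i, w i (O i) * (load w N (O i) + load w O (O i)) ^ p := by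
      refine mul_le_mul_of_nonneg_left (sum_le_sum fun i _ => ?_) (by positivity)
      refine (hN.mul_loadPre_pow_le (by omega) hw i (O i)).trans ?_
      have hle := le_load_self w hw' O i
      have := hLN (O i)
      have := hw' i (O i)
      gcongr
    _ = (p + 1) * ∑ j, load w O j * (load w N + load w O) j ^ p := by rw [sum_load_mul]; rfl
    _ ≤ (p + 1) * (lpNormSucc p (load w O) * lpNormSucc p (load w N + load w O) ^ p) := by
      gcongr
      exact sum_mul_pow_le_lpNormSucc_mul_pow hp hLO fun j => add_nonneg (hLN j) (hLO j)
    _ ≤ _ := by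
      have := lpNormSucc_nonneg (p := p) hLO
      have := lpNormSucc_nonneg (p := p) fun j => add_nonneg (hLN j) (hLO j)
      rw [← mul_assoc]
      gcongr
      exact lpNormSucc_add_le hLN hLO

end Game

theorem stmt_12 (n m : ℕ) (p : ℕ) (hp : 1 ≤ p) (hm : 0 < m)
    (w : Fin n → Fin m → ℝ) (hw : ∀ i j, 0 < w i j)
    (N O : Fin n → Fin m) (hN : isNashA p w N) :
    (∑ j, load w N j ^ (p + 1)) ^ ((1 : ℝ) / (p + 1)) ≤
      Real.exp 1 * (p + 1) * (m : ℝ) ^ ((1 : ℝ) / (p + 1)) *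
        Finset.univ.sup' ⟨⟨0, hm⟩, Finset.mem_univ _⟩ (load w O) := by
  have hw' : ∀ i j, 0 ≤ w i j := fun i j => (hw i j).le
  set M := Finset.univ.sup' ⟨⟨0, hm⟩, Finset.mem_univ _⟩ (load w O)
  have hLO_le : ∀ j, load w O j ≤ M := fun j => le_sup' (load w O) (mem_univ j)
  have hO : lpNormSucc p (load w O) ≤ (m : ℝ) ^ ((1 : ℝ) / (p + 1)) * M := by
    simpa using lpNormSucc_le_card_rpow_mul (load_nonneg w hw' O) hLO_le
      ((load_nonneg w hw' O _).trans (hLO_le ⟨0, hm⟩))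
  have hpow := hN.sum_load_pow_succ_le_lpNormSucc hp hw O
  rw [← lpNormSucc_pow (load_nonneg w hw' N)] at hpow
  calc _ = lpNormSucc p (load w N) := rfl
    _ ≤ Real.exp 1 * (p + 1) * lpNormSucc p (load w O) :=
      le_exp_one_mul_of_pow_succ_le p (lpNormSucc_nonneg (load_nonneg w hw' O)) hpow
    _ ≤ _ := by
      rw [mul_assoc _ _ M]
      gcongr
end

section
/- For every multiset D of size k(k-1) (k ≥ 2), the number ζ_1(D) of ordered partitions of D into k disjoint ordered multisets each of size k-1 and the number ζ_2(D) of ordered partitions of D into k-1 disjoint ordered multisets each of size k satisfy ζ_1(D)/ζ_2(D) ≤ k^{k-1}/(k-1)!. -/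
/-!
Both counts are numbers of ordered partitions of `D` with prescribed part sizes. Moving one
element from a part of size `a` to a part of size `b ≥ a - 1` multiplies this number by at least
`a / (b + 1)`: grouping the partitions by the union `G` of the two parts reduces this to
`a * N_G(a) ≤ (b + 1) * N_G(a - 1)`, where `N_G(r)` is the number of distinct `r`-element
submultisets of `G`. That inequality follows by double counting from the symmetry and
unimodality of `r ↦ N_G(r)`, proved by removing the copies of one element at a time.
Draining one of the `k` parts of size `k - 1` into the other `k - 1` parts, one element per part,
multiplies the number of partitions by at least `(k - 1)! / k ^ (k - 1)`, and the drained part,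
now empty, can be dropped.
-/

open Finset
open scoped Nat

theorem Int.apply_le_apply_of_symm_of_le_succ {β : Type*} [Preorder β] {N : ℤ → β} {n : ℤ}
    (symm : ∀ r, N (n - r) = N r) (step : ∀ r, 2 * r ≤ n + 1 → N (r - 1) ≤ N r)
    {p q : ℤ} (hpq : p ≤ q) (hsum : p + q ≤ n) : N p ≤ N q := by
  have mono : ∀ q, p ≤ q → 2 * q ≤ n + 1 → N p ≤ N q := by
    intro q hpq
    induction q, hpq using Int.leInduction with
    | base => exact fun _ => le_rfl
    | succ q _ ih => exact fun hq => (ih (by omega)).trans (by simpa using step (q + 1) hq)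
  rcases le_or_gt (2 * q) (n + 1) with hq | hq
  · exact mono q hpq hq
  · rw [← symm q]
    exact mono _ (by omega) (by omega)

theorem Nat.sum_range_succ_mul_le_sum_range_sub_mul {a : ℕ → ℕ} {m : ℕ}
    (h : ∀ i j, i + j + 1 = m → i ≤ j → a j ≤ a i) :
    ∑ j ∈ range m, (j + 1) * a j ≤ ∑ j ∈ range m, (m - j) * a j := by
  have reflect (w w' : ℕ → ℕ) (hw : ∀ j < m, w (m - 1 - j) = w' j) :
      ∑ j ∈ range m, w j * a (m - 1 - j) = ∑ j ∈ range m, w' j * a j := by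
    rw [← sum_range_reflect]
    refine sum_congr rfl fun j hj => ?_
    rw [hw j (mem_range.1 hj), show m - 1 - (m - 1 - j) = j by grind]
  have pair : ∀ j ∈ range m, (j + 1) * a j + (m - j) * a (m - 1 - j) ≤
      (m - j) * a j + (j + 1) * a (m - 1 - j) := by
    intro j hj
    obtain ⟨d, rfl⟩ : ∃ d, m = j + d + 1 := ⟨m - j - 1, by grind⟩
    rw [show j + d + 1 - 1 - j = d by omega, show j + d + 1 - j = d + 1 by omega]
    rcases le_total j d with hjd | hdj
    · have := h j d (by omega) hjd
      nlinarith
    · have := h d j (by omega) hdj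
      nlinarith
  have := sum_le_sum pair
  rw [sum_add_distrib, sum_add_distrib, reflect (m - ·) (· + 1) (fun j hj => by omega),
    reflect (· + 1) (m - ·) (fun j hj => by omega)] at this
  omega

namespace Multiset

variable {α : Type*} [DecidableEq α]

/-- Indexed by `r : ℤ` so that it is empty, rather than a junk value, for negative `r`. -/
def submultisetsOfCard (E : Multiset α) (r : ℤ) : Finset (Multiset α) :=
  {B ∈ E.powerset.toFinset | (card B : ℤ) = r}

@[simp]
theorem mem_submultisetsOfCard {E B : Multiset α} {r : ℤ} :
    B ∈ E.submultisetsOfCard r ↔ B ≤ E ∧ (card B : ℤ) = r := by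
  simp [submultisetsOfCard]

theorem submultisetsOfCard_eq_empty {E : Multiset α} {r : ℤ} (hr : r < 0) :
    E.submultisetsOfCard r = ∅ := by
  ext B
  simp only [mem_submultisetsOfCard, Finset.notMem_empty, iff_false, not_and]
  omega

theorem card_submultisetsOfCard_card_sub (E : Multiset α) (r : ℤ) :
    #(E.submultisetsOfCard (card E - r)) = #(E.submultisetsOfCard r) := by
  refine card_nbij' (E - ·) (E - ·) ?_ ?_ ?_ ?_ <;> intro B hB <;>
    simp only [Finset.mem_coe, mem_submultisetsOfCard] at hB ⊢ <;>
    have := card_le_card hB.1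
  · exact ⟨tsub_le_self, by rw [card_sub hB.1]; omega⟩
  · exact ⟨tsub_le_self, by rw [card_sub hB.1]; omega⟩
  · exact tsub_tsub_cancel_of_le hB.1
  · exact tsub_tsub_cancel_of_le hB.1

theorem filter_ne_add_replicate_count (E : Multiset α) (x : α) :
    E.filter (· ≠ x) + replicate (count x E) x = E := by
  conv_rhs => rw [← filter_add_not (· ≠ x) E]
  simp only [ne_eq, not_not, filter_eq']

theorem card_filter_ne_add_count (E : Multiset α) (x : α) :
    card (E.filter (· ≠ x)) + count x E = card E := by
  simpa using congrArg card (filter_ne_add_replicate_count E x)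

theorem card_submultisetsOfCard_filter_count_eq (E : Multiset α) (x : α) (r : ℤ) {j : ℕ}
    (hj : j ≤ count x E) :
    #{B ∈ E.submultisetsOfCard r | count x B = j} =
      #((E.filter (· ≠ x)).submultisetsOfCard (r - j)) := by
  refine card_nbij' (·.filter (· ≠ x)) (· + replicate j x) ?_ ?_ ?_ ?_ <;> intro B hB <;>
    simp only [Finset.mem_coe, Finset.mem_filter, mem_submultisetsOfCard, le_filter] at hB ⊢
  · obtain ⟨⟨hBE, hcard⟩, rfl⟩ := hB
    have := card_filter_ne_add_count B x
    exact ⟨le_filter.1 (filter_le_filter _ hBE), by omega⟩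
  · obtain ⟨⟨hBE, hBx⟩, hcard⟩ := hB
    have hx : count x B = 0 := count_eq_zero.2 fun h => hBx x h rfl
    refine ⟨⟨?_, by simp [hcard]⟩, by simp [hx]⟩
    rw [← filter_ne_add_replicate_count E x]
    exact add_le_add (le_filter.2 ⟨hBE, hBx⟩) ((replicate_le_replicate x).2 hj)
  · rw [← hB.2]
    exact filter_ne_add_replicate_count B x
  · rw [filter_add, filter_eq_self.2 hB.1.2, filter_eq_nil.2 fun a ha => by
      simp [eq_of_mem_replicate ha], add_zero]

theorem sum_submultisetsOfCard_comp_count {M : Type*} [AddCommMonoid M] (E : Multiset α)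
    (x : α) (r : ℤ) (w : ℕ → M) :
    ∑ B ∈ E.submultisetsOfCard r, w (count x B) =
      ∑ j ∈ Finset.range (count x E + 1),
        #((E.filter (· ≠ x)).submultisetsOfCard (r - j)) • w j := by
  rw [← sum_fiberwise_of_maps_to' (g := (count x ·)) (t := Finset.range (count x E + 1))
    fun B hB => mem_range_succ_iff.2 (count_le_of_le x (mem_submultisetsOfCard.1 hB).1)]
  refine sum_congr rfl fun j hj => ?_
  rw [sum_const, card_submultisetsOfCard_filter_count_eq E x r (mem_range_succ_iff.1 hj)]

theorem card_submultisetsOfCard_eq_sum_range (E : Multiset α) (x : α) (r : ℤ) :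
    #(E.submultisetsOfCard r) =
      ∑ j ∈ Finset.range (count x E + 1),
        #((E.filter (· ≠ x)).submultisetsOfCard (r - j)) := by
  simpa using sum_submultisetsOfCard_comp_count E x r fun _ => (1 : ℕ)

theorem card_submultisetsOfCard_le (E : Multiset α) {p q : ℤ} (hpq : p ≤ q)
    (hsum : p + q ≤ card E) : #(E.submultisetsOfCard p) ≤ #(E.submultisetsOfCard q) := by
  induction h : card E using Nat.strong_induction_on generalizing E p q with
  | _ n ih =>
    subst h
    refine Int.apply_le_apply_of_symm_of_le_succ (N := fun r => #(E.submultisetsOfCard r))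
      (card_submultisetsOfCard_card_sub E) (fun r hr => ?_) hpq hsum
    rcases le_or_gt r 0 with hr0 | hr0
    · simp [submultisetsOfCard_eq_empty (show r - 1 < 0 by omega)]
    obtain ⟨x, hx⟩ := card_pos_iff_exists_mem.1 (show 0 < card E by omega)
    have hcard := card_filter_ne_add_count E x
    have hm := one_le_count_iff_mem.2 hx
    -- the two window sums differ only in the terms for `r` and `r - 1 - count x E`
    have ends := ih _ (by omega) (E.filter (· ≠ x)) (p := r - 1 - count x E) (q := r) (by omega)
      (by omega) rfl
    rw [card_submultisetsOfCard_eq_sum_range E x, card_submultisetsOfCard_eq_sum_range E x,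
      sum_range_succ, sum_range_succ']
    have shift (j : ℕ) : r - 1 - j = r - (j + 1 : ℕ) := by omega
    simp only [shift, Nat.cast_zero, sub_zero] at ends ⊢
    omega

theorem sum_count_le_sum_count_sub (E : Multiset α) (x : α) {s : ℕ}
    (hs : 2 * s + 1 ≤ card E) :
    ∑ A ∈ E.submultisetsOfCard (s + 1 : ℕ), count x A ≤
      ∑ B ∈ E.submultisetsOfCard s, count x (E - B) := by
  have hcard := card_filter_ne_add_count E x
  -- grouped by the multiplicity `j < count x E` of `x`, the sides become `∑ (j + 1) * N (s - j)`
  -- and `∑ (count x E - j) * N (s - j)`, `N` counting submultisets of `E.filter (· ≠ x)`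
  simp only [count_sub]
  rw [sum_submultisetsOfCard_comp_count E x _ (fun j => j),
    sum_submultisetsOfCard_comp_count E x _ (count x E - ·), sum_range_succ', sum_range_succ]
  have shift (j : ℕ) : ((s + 1 : ℕ) : ℤ) - (j + 1 : ℕ) = s - j := by omega
  simp only [shift, smul_eq_mul, mul_zero, add_zero, Nat.sub_self]
  simp only [mul_comm (#_)]
  exact Nat.sum_range_succ_mul_le_sum_range_sub_mul fun i j hij hle =>
    card_submultisetsOfCard_le _ (by omega) (by omega)

theorem succ_mul_card_submultisetsOfCard_le (E : Multiset α) {s : ℕ}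
    (hs : 2 * s + 1 ≤ card E) :
    (s + 1) * #(E.submultisetsOfCard (s + 1 : ℕ)) ≤
      (card E - s) * #(E.submultisetsOfCard s) := by
  have sum_count {A : Multiset α} (hA : A ≤ E) : ∑ x ∈ E.toFinset, count x A = card A :=
    sum_count_eq_card fun a ha => mem_toFinset.2 (mem_of_le hA ha)
  calc (s + 1) * #(E.submultisetsOfCard (s + 1 : ℕ))
      = ∑ A ∈ E.submultisetsOfCard (s + 1 : ℕ), ∑ x ∈ E.toFinset, count x A := by
        rw [mul_comm, ← sum_const_nat]
        intro A hA
        rw [mem_submultisetsOfCard] at hA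
        rw [sum_count hA.1]
        omega
    _ = ∑ x ∈ E.toFinset, ∑ A ∈ E.submultisetsOfCard (s + 1 : ℕ), count x A := sum_comm
    _ ≤ ∑ x ∈ E.toFinset, ∑ B ∈ E.submultisetsOfCard s, count x (E - B) :=
        sum_le_sum fun x _ => sum_count_le_sum_count_sub E x hs
    _ = ∑ B ∈ E.submultisetsOfCard s, ∑ x ∈ E.toFinset, count x (E - B) := sum_comm
    _ = (card E - s) * #(E.submultisetsOfCard s) := by
        rw [mul_comm, ← sum_const_nat]
        intro B hB
        rw [mem_submultisetsOfCard] at hB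
        rw [sum_count tsub_le_self, card_sub hB.1]
        omega

end Multiset

def Function.mergeParts {ι M : Type*} [DecidableEq ι] [AddZeroClass M] (u v : ι)
    (f : ι → M) : ι → M :=
  Function.update f u 0 + Pi.single v (f u)

namespace Function

variable {ι M : Type*} [DecidableEq ι] {u v t : ι}

theorem mergeParts_apply_left [AddZeroClass M] (f : ι → M) (huv : u ≠ v) :
    mergeParts u v f u = 0 := by
  simp [mergeParts, huv]

theorem mergeParts_apply_right [AddZeroClass M] (f : ι → M) (huv : u ≠ v) :
    mergeParts u v f v = f v + f u := by
  simp [mergeParts, huv.symm]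

theorem mergeParts_apply_of_ne [AddZeroClass M] (f : ι → M) (htu : t ≠ u) (htv : t ≠ v) :
    mergeParts u v f t = f t := by
  simp [mergeParts, htu, htv]

theorem map_mergeParts {N : Type*} [AddZeroClass M] [AddZeroClass N] (g : M →+ N) (f : ι → M)
    (t : ι) : g (mergeParts u v f t) = mergeParts u v (g ∘ f) t := by
  simp only [mergeParts, Pi.add_apply, map_add, update_apply, Pi.single_apply]
  split_ifs <;> simp

theorem sum_mergeParts [Fintype ι] [AddCommMonoid M] (f : ι → M) :
    ∑ t, mergeParts u v f t = ∑ t, f t := by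
  have split : f = update f u 0 + Pi.single u (f u) := by
    ext t
    by_cases htu : t = u <;> simp [htu]
  conv_rhs => rw [split]
  simp [mergeParts, Finset.sum_add_distrib]

end Function

namespace Multiset

open Function

variable {α ι : Type*} [DecidableEq α] [Fintype ι] [DecidableEq ι]

def orderedPartitions (D : Multiset α) (c : ι → ℕ) : Finset (ι → Multiset α) :=
  {f ∈ Fintype.piFinset fun _ => D.powerset.toFinset |
    (∀ t, card (f t) = c t) ∧ ∑ t, f t = D}

theorem mem_orderedPartitions {D : Multiset α} {c : ι → ℕ} {f : ι → Multiset α} :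
    f ∈ D.orderedPartitions c ↔ (∀ t, card (f t) = c t) ∧ ∑ t, f t = D := by
  refine mem_filter.trans (and_iff_right_of_imp fun hf => Fintype.mem_piFinset.2 fun t => ?_)
  rw [mem_toFinset, mem_powerset, ← hf.2]
  exact Finset.single_le_sum (fun _ _ => zero_le _) (Finset.mem_univ t)

theorem natCard_eq_card_orderedPartitions (D : Multiset α) (c : ι → ℕ) :
    Nat.card {f : ι → Multiset α // (∀ t, card (f t) = c t) ∧ ∑ t, f t = D} =
      #(D.orderedPartitions c) := by
  rw [← Nat.card_eq_finsetCard]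
  exact Nat.card_congr (Equiv.subtypeEquivRight fun _ => mem_orderedPartitions.symm)

theorem mergeParts_mem_orderedPartitions {D : Multiset α} {c : ι → ℕ} {f : ι → Multiset α}
    (hf : f ∈ D.orderedPartitions c) (u v : ι) :
    mergeParts u v f ∈ D.orderedPartitions (mergeParts u v c) := by
  obtain ⟨hfc, hfD⟩ := mem_orderedPartitions.1 hf
  refine mem_orderedPartitions.2 ⟨fun t => ?_, by rw [sum_mergeParts, hfD]⟩
  rw [show card (mergeParts u v f t) = _ from map_mergeParts cardHom f t]
  exact congrArg (mergeParts u v · t) (funext hfc)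

theorem card_filter_mergeParts_eq (D : Multiset α) (c : ι → ℕ) {u v : ι} (huv : u ≠ v)
    {g : ι → Multiset α} (hg : g ∈ D.orderedPartitions (mergeParts u v c)) :
    #{f ∈ D.orderedPartitions c | mergeParts u v f = g} =
      #((g v).submultisetsOfCard (c u)) := by
  obtain ⟨hgc, hgD⟩ := mem_orderedPartitions.1 hg
  have hgu : g u = 0 := card_eq_zero.1 <| by rw [hgc, mergeParts_apply_left _ huv]
  have hgv : card (g v) = c v + c u := by rw [hgc, mergeParts_apply_right _ huv]
  have hgt {t} (htu : t ≠ u) (htv : t ≠ v) : card (g t) = c t := by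
    rw [hgc, mergeParts_apply_of_ne _ htu htv]
  let split (A : Multiset α) : ι → Multiset α := update (update g v (g v - A)) u A
  have merge_split {A} (hA : A ≤ g v) : mergeParts u v (split A) = g := by
    ext1 t
    rcases eq_or_ne t u with rfl | htu
    · simp [mergeParts_apply_left _ huv, hgu]
    rcases eq_or_ne t v with rfl | htv
    · simp [split, mergeParts_apply_right _ huv, huv.symm, tsub_add_cancel_of_le hA]
    · simp [split, mergeParts_apply_of_ne _ htu htv, htu, htv]
  refine card_nbij' (· u) split ?_ ?_ ?_ ?_ <;> intro f hf <;>
    simp only [coe_filter, Set.mem_ofPred_eq, Finset.mem_coe, mem_orderedPartitions,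
      mem_submultisetsOfCard] at hf ⊢
  · obtain ⟨⟨hfc, -⟩, rfl⟩ := hf
    rw [mergeParts_apply_right _ huv, hfc]
    exact ⟨Multiset.le_add_left _ _, rfl⟩
  · obtain ⟨hA, hAc⟩ := hf
    have hAc : card f = c u := by exact_mod_cast hAc
    refine ⟨⟨fun t => ?_, by rw [← sum_mergeParts, merge_split hA, hgD]⟩, merge_split hA⟩
    rcases eq_or_ne t u with rfl | htu
    · simp [split, hAc]
    rcases eq_or_ne t v with rfl | htv
    · simp [split, huv.symm, card_sub hA, hgv, hAc]
    · simp [split, htu, htv, hgt htu htv]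
  · obtain ⟨-, rfl⟩ := hf
    ext1 t
    rcases eq_or_ne t u with rfl | htu
    · simp [split]
    rcases eq_or_ne t v with rfl | htv
    · simp [split, huv.symm, mergeParts_apply_right _ huv]
    · simp [split, htu, htv, mergeParts_apply_of_ne _ htu htv]
  · simp [split]

theorem mul_card_orderedPartitions_le (D : Multiset α) {c c' : ι → ℕ} {u v : ι}
    (huv : u ≠ v) (hu : c' u + 1 = c u) (hv : c' v = c v + 1)
    (hc' : ∀ t, t ≠ u → t ≠ v → c' t = c t) (hle : c u ≤ c v + 1) :
    c u * #(D.orderedPartitions c) ≤ c' v * #(D.orderedPartitions c') := by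
  have merge_eq : mergeParts u v c' = mergeParts u v c := by
    ext1 t
    rcases eq_or_ne t u with rfl | htu
    · simp [mergeParts_apply_left _ huv]
    rcases eq_or_ne t v with rfl | htv
    · simp only [mergeParts_apply_right _ huv]
      omega
    · simp [mergeParts_apply_of_ne _ htu htv, hc' t htu htv]
  rw [card_eq_sum_card_fiberwise fun f hf => mergeParts_mem_orderedPartitions hf u v,
    card_eq_sum_card_fiberwise fun f hf => mergeParts_mem_orderedPartitions hf u v, merge_eq,
    mul_sum, mul_sum]
  refine sum_le_sum fun g hg => ?_
  have hgv : card (g v) = c v + c u := by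
    rw [(mem_orderedPartitions.1 hg).1, mergeParts_apply_right _ huv]
  have := succ_mul_card_submultisetsOfCard_le (g v) (s := c' u) (by omega)
  rw [card_filter_mergeParts_eq D c huv hg,
    card_filter_mergeParts_eq D c' huv (by rwa [merge_eq])]
  rwa [hu, hgv, show c v + c u - c' u = c' v by omega] at this

theorem card_orderedPartitions_cons_zero (D : Multiset α) {K : ℕ} (c : Fin K → ℕ) :
    #(D.orderedPartitions (Fin.cons 0 c : Fin (K + 1) → ℕ)) = #(D.orderedPartitions c) := by
  refine card_nbij' Fin.tail (fun g => Fin.cons 0 g) ?_ ?_ ?_ ?_ <;> intro f hf <;>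
    simp only [Finset.mem_coe, mem_orderedPartitions, Fin.forall_fin_succ, Fin.cons_zero,
      Fin.cons_succ, Fin.sum_univ_succ, card_eq_zero] at hf ⊢
  · obtain ⟨⟨hf0, hfc⟩, hfD⟩ := hf
    exact ⟨hfc, by rwa [hf0, zero_add] at hfD⟩
  · simpa using hf
  · rw [← hf.1.1]
    exact Fin.cons_self_tail f
  · exact Fin.tail_cons _ _

/-- The part sizes once parts `1, …, i` of a partition into `K + 1` parts of size `K` have each
received one element from part `0`. -/
def fillingSizes (K i : ℕ) : Fin (K + 1) → ℕ :=
  Fin.cons (K - i) fun j => if (j : ℕ) < i then K + 1 else K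

theorem fillingSizes_zero (K : ℕ) : fillingSizes K 0 = fun _ => K := by
  ext j
  cases j using Fin.cases <;> simp [fillingSizes]

theorem fillingSizes_self (K : ℕ) : fillingSizes K K = Fin.cons 0 fun _ => K + 1 := by
  simp [fillingSizes]

theorem mul_card_orderedPartitions_fillingSizes_le (D : Multiset α) {K i : ℕ} (hi : i < K) :
    (K - i) * #(D.orderedPartitions (fillingSizes K i)) ≤
      (K + 1) * #(D.orderedPartitions (fillingSizes K (i + 1))) := by
  set v : Fin (K + 1) := Fin.succ ⟨i, hi⟩
  have hu : fillingSizes K i 0 = K - i := rfl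
  have hu' : fillingSizes K (i + 1) 0 + 1 = fillingSizes K i 0 := by
    simp only [fillingSizes, Fin.cons_zero]
    omega
  have hv : fillingSizes K i v = K := by simp [v, fillingSizes, -Fin.succ_mk]
  have hv' : fillingSizes K (i + 1) v = K + 1 := by simp [v, fillingSizes, -Fin.succ_mk]
  have hrest (t : Fin (K + 1)) (h0 : t ≠ 0) (htv : t ≠ v) :
      fillingSizes K (i + 1) t = fillingSizes K i t := by
    cases t using Fin.cases with
    | zero => exact absurd rfl h0
    | succ j =>
      have : (j : ℕ) ≠ i := fun h => htv (by rw [Fin.succ_inj]; exact Fin.ext h)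
      simp only [fillingSizes, Fin.cons_succ]
      split_ifs <;> omega
  have := mul_card_orderedPartitions_le D (Fin.succ_ne_zero _).symm hu' (by rw [hv, hv']) hrest
    (by rw [hu, hv]; omega)
  rwa [hu, hv'] at this

theorem factorial_mul_card_orderedPartitions_le (D : Multiset α) (K : ℕ) {i : ℕ}
    (hi : i ≤ K) :
    K ! * #(D.orderedPartitions (fillingSizes K 0)) ≤
      (K - i)! * (K + 1) ^ i * #(D.orderedPartitions (fillingSizes K i)) := by
  induction i with
  | zero => simp
  | succ i ih =>
    calc K ! * #(D.orderedPartitions (fillingSizes K 0))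
        ≤ (K - (i + 1))! * (K + 1) ^ i *
            ((K - i) * #(D.orderedPartitions (fillingSizes K i))) := by
          refine (ih (by omega)).trans (le_of_eq ?_)
          rw [show K - i = K - (i + 1) + 1 by omega, Nat.factorial_succ]
          ring
      _ ≤ (K - (i + 1))! * (K + 1) ^ i *
            ((K + 1) * #(D.orderedPartitions (fillingSizes K (i + 1)))) :=
          Nat.mul_le_mul_left _ (mul_card_orderedPartitions_fillingSizes_le D hi)
      _ = (K - (i + 1))! * (K + 1) ^ (i + 1) *
            #(D.orderedPartitions (fillingSizes K (i + 1))) := by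
          ring

end Multiset

theorem stmt_18_general {α : Type*} (k : ℕ) (D : Multiset α) :
    Nat.card {f : Fin k → Multiset α //
        (∀ t, Multiset.card (f t) = k - 1) ∧ ∑ t, f t = D} * (k - 1).factorial ≤
      Nat.card {f : Fin (k - 1) → Multiset α //
        (∀ t, Multiset.card (f t) = k) ∧ ∑ t, f t = D} * k ^ (k - 1) := by
  classical
  rcases k with _ | K
  · simp
  rw [Nat.add_sub_cancel, Multiset.natCard_eq_card_orderedPartitions D (fun _ => K),
    Multiset.natCard_eq_card_orderedPartitions D (fun _ => K + 1),
    ← Multiset.card_orderedPartitions_cons_zero D (fun _ => K + 1),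
    ← Multiset.fillingSizes_self, ← Multiset.fillingSizes_zero, mul_comm, mul_comm _ (_ ^ _)]
  simpa using Multiset.factorial_mul_card_orderedPartitions_le D K le_rfl

theorem stmt_18 {α : Type*} (k : ℕ) (hk : 2 ≤ k) (D : Multiset α)
    (hD : Multiset.card D = k * (k - 1)) :
    Nat.card {f : Fin k → Multiset α //
        (∀ t, Multiset.card (f t) = k - 1) ∧ ∑ t, f t = D} * (k - 1).factorial ≤
      Nat.card {f : Fin (k - 1) → Multiset α //
        (∀ t, Multiset.card (f t) = k) ∧ ∑ t, f t = D} * k ^ (k - 1) :=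
  stmt_18_general k D
end
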